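/- arXiv:2604.15242 — 2 statements merged into one kernel-verified Lean document; each statement's English description precedes it below -/
import Mathlib

section
/- Let Ψ(w) = −Σᵢ log(wᵢ) be the log-barrier on ℝ^K_{>0}, and for w ∈ W ∩ ℝ^K_{>0} define the local dual norm ‖x‖_{⋆,w}² = Σᵢ wᵢ² xᵢ². Suppose w ∈ W = Δ_A × Δ_B satisfies d_τ(w) := min_{g ∈ N_W(w)} ‖F_τ(w) + g‖_{⋆,w} ≤ τ, where F_τ(w) = F(w) + τ∇Ψ(w), the entries of F(w) lie in [0,1], and K = A + B. Then max_{w' ∈ W} ⟨F(w), w − w'⟩ ≤ 2τK. -/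
open Finset

/-- The product of two probability simplices, over index set `Fin A ⊕ Fin B`. -/
def prodSimplex (A B : ℕ) : Set (Fin A ⊕ Fin B → ℝ) :=
  {w | (∀ i, 0 ≤ w i) ∧ (∑ i, w (Sum.inl i)) = 1 ∧ (∑ j, w (Sum.inr j)) = 1}

/-- Dual-gap lemma: if the dual distance `d_τ(w)` between the normal cone at `w` and
`−F_τ(w)` (in the local norm `‖·‖_{⋆,w}`) is at most `τ`, then the exploitability gap
`max_{w'} ⟨F(w), w − w'⟩` is at most `2τK`, with `K = A + B`. -/
theorem stmt_5 (A B : ℕ) (τ : ℝ) (hτ : 0 < τ)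
    (w : Fin A ⊕ Fin B → ℝ) (hwpos : ∀ i, 0 < w i) (hwW : w ∈ prodSimplex A B)
    (Fw : Fin A ⊕ Fin B → ℝ) (hF : ∀ i, Fw i ∈ Set.Icc (0 : ℝ) 1)
    -- `d_τ(w) ≤ τ` : some `g` in the normal cone `N_W(w)` satisfies
    -- `‖F(w) + τ∇Ψ(w) + g‖_{⋆,w} ≤ τ`, where `∇Ψ(w)_i = −1/wᵢ`.
    (hdual : ∃ g : Fin A ⊕ Fin B → ℝ,
      (∀ w' ∈ prodSimplex A B, 0 ≤ ∑ i, g i * (w i - w' i)) ∧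
      Real.sqrt (∑ i, (w i) ^ 2 * (Fw i + τ * (-(1 / w i)) + g i) ^ 2) ≤ τ) :
    ∀ w' ∈ prodSimplex A B, ∑ i, Fw i * (w i - w' i) ≤ 2 * τ * (A + B) := by
  obtain ⟨g, hg, hnorm⟩ := hdual
  set h : Fin A ⊕ Fin B → ℝ := fun i => Fw i + τ * (-(1 / w i)) + g i with hh
  -- sum of squares bound
  have hSnn : 0 ≤ ∑ i, (w i) ^ 2 * (h i) ^ 2 := by
    apply Finset.sum_nonneg; intro i _; positivity
  have hS : ∑ i, (w i) ^ 2 * (h i) ^ 2 ≤ τ ^ 2 := by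
    have := Real.sq_sqrt hSnn
    nlinarith [Real.sqrt_nonneg (∑ i, (w i) ^ 2 * (h i) ^ 2)]
  -- termwise bound |w i * h i| ≤ τ
  have hterm : ∀ i, (w i) ^ 2 * (h i) ^ 2 ≤ τ ^ 2 := by
    intro i
    calc (w i) ^ 2 * (h i) ^ 2 ≤ ∑ j, (w j) ^ 2 * (h j) ^ 2 := by
          apply Finset.single_le_sum (f := fun j => (w j) ^ 2 * (h j) ^ 2)
          · intro j _; positivity
          · exact Finset.mem_univ i
      _ ≤ τ ^ 2 := hS
  have habs : ∀ i, -τ ≤ w i * h i ∧ w i * h i ≤ τ := by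
    intro i
    have := hterm i
    constructor <;> nlinarith [sq_nonneg (w i * h i - τ), sq_nonneg (w i * h i + τ)]
  have hFg : ∀ i, Fw i + g i = h i + τ * (1 / w i) := by
    intro i; rw [hh]; ring
  clear_value h
  intro w' hw'
  have hg' := hg w' hw'
  have hw'nn : ∀ i, 0 ≤ w' i := hw'.1
  -- key termwise bound
  have key : ∀ i, (Fw i + g i) * (w i - w' i) ≤ 2 * τ := by
    intro i
    have hwi := hwpos i
    have h1 : w i * (1 / w i) = 1 := mul_one_div_cancel (ne_of_gt hwi)
    have h2 : 0 ≤ w' i / w i := div_nonneg (hw'nn i) hwi.le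
    have h3 : (w' i / w i) * w i = w' i := div_mul_cancel₀ _ (ne_of_gt hwi)
    have h4 := (habs i).1
    have h5 := (habs i).2
    have hsum : 0 ≤ h i + τ * (1 / w i) := by
      have e : h i + τ * (1 / w i) = (w i * h i + τ) * (1 / w i) := by
        field_simp
      rw [e]
      exact mul_nonneg (by linarith) (by positivity)
    have hpos : 0 ≤ (h i + τ * (1 / w i)) * w' i := mul_nonneg hsum (hw'nn i)
    have e2 : (h i + τ * (1 / w i)) * (w i - w' i)
        = w i * h i + τ * (w i * (1 / w i)) - (h i + τ * (1 / w i)) * w' i := by ring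
    rw [hFg i, e2, h1]
    nlinarith [hpos, h5, hτ]
  calc ∑ i, Fw i * (w i - w' i)
      ≤ ∑ i, Fw i * (w i - w' i) + ∑ i, g i * (w i - w' i) := by linarith
    _ = ∑ i, (Fw i + g i) * (w i - w' i) := by
        rw [← Finset.sum_add_distrib]; congr 1; ext i; ring
    _ ≤ ∑ _i : Fin A ⊕ Fin B, 2 * τ := Finset.sum_le_sum (fun i _ => key i)
    _ = 2 * τ * (A + B) := by
        simp [Finset.sum_const, Fintype.card_sum]; ring
end

section
/- Let δ ∈ (0,1), T₀ ∈ ℕ, and let U be a nonnegative stochastic process adapted to a filtration F. Define the stopping time T₁ = min{t : U^t > log((t+T₀)/δ)/√(t+T₀)}. Assume U⁰ ≤ log(T₀)/√T₀ and for all t < T₁, U^{t+1} = (1 − 1/(t+T₀))U^t + b^{t+1} + W^{t+1} where b^{t+1} ≤ (t+T₀+1)^{−3/2} and (W^t) is adapted with E[W^{t+1} | F^t] = 0 and |W^{t+1}|² ≤ (t+T₀+1)^{−3/2} U^t / 2 almost surely. Then P(T₁ < ∞) ≤ δ. -/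
/-!
Write `n = t + T₀` and `Q t = exp (√n U t) / n`, so that `Q t > 1 / δ` exactly when `U t` is
above its threshold. Stopped at the first such time, `Q` decreases in expectation. Before
stopping, the recursion bounds `Q (t + 1)` by `Y exp (√(n + 1) W (t + 1))` with `Y` known at
time `t`. Since `|W (t + 1)| ≤ B` with `B² = c U t / 2` and `c = (n + 1) ^ (-3/2)`, the convexity
form of Hoeffding's lemma, `exp x ≤ cosh b + x sinh b / b` for `|x| ≤ b`, replaces the exponential
of the martingale difference by `cosh (√(n + 1) B) ≤ exp (U t / (4 √(n + 1)))`. The elementary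
bounds `√(n + 1) (1 - 1 / n) + 1 / (4 √(n + 1)) ≤ √n` and `exp (1 / (n + 1)) ≤ (n + 1) / n`
absorb the contraction, the drift and the variance. As `Q 0 ≤ 1`, Markov's inequality for the
stopped process at each horizon, followed by a monotone limit, is Ville's inequality
`P (∃ t, Q t > 1 / δ) ≤ δ`.
-/

open MeasureTheory Real

lemma exp_le_cosh_add_mul_sinh_div {x b : ℝ} (h : |x| ≤ b) :
    exp x ≤ cosh b + x * (sinh b / b) := by
  obtain rfl | hb := ((abs_nonneg x).trans h).eq_or_lt
  · simp [abs_nonpos_iff.1 h]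
  obtain ⟨hxl, hxr⟩ := abs_le.1 h
  have hp : 0 ≤ (b + x) / (2 * b) := div_nonneg (by linarith) (by positivity)
  have hq : 0 ≤ (b - x) / (2 * b) := div_nonneg (by linarith) (by positivity)
  have hconv := convexOn_exp.2 (Set.mem_univ b) (Set.mem_univ (-b)) hp hq (by field_simp; ring)
  have hx : ((b + x) / (2 * b)) • b + ((b - x) / (2 * b)) • -b = x := by
    simp only [smul_eq_mul]; field_simp; ring
  rw [hx] at hconv
  refine hconv.trans_eq ?_
  simp only [smul_eq_mul, cosh_eq, sinh_eq]
  field_simp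
  ring

lemma abs_mul_sinh_div_le_cosh {x b : ℝ} (h : |x| ≤ b) : |x * (sinh b / b)| ≤ cosh b := by
  have h₁ := exp_le_cosh_add_mul_sinh_div h
  have h₂ := exp_le_cosh_add_mul_sinh_div (x := -x) (b := b) (by rwa [abs_neg])
  rw [abs_le]
  constructor <;> nlinarith [exp_pos x, exp_pos (-x)]

lemma sqrt_mul_one_sub_inv_add_le_sqrt {n : ℝ} (hn : 1 ≤ n) :
    √(n + 1) * (1 - 1 / n) + 1 / (4 * √(n + 1)) ≤ √n := by
  have hn0 : (0 : ℝ) < n := by linarith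
  have hs2 : √n ^ 2 = n := sq_sqrt hn0.le
  have hr2 : √(n + 1) ^ 2 = n + 1 := sq_sqrt (by linarith)
  have hs0 : 0 < √n := sqrt_pos.2 hn0
  have hr0 : 0 < √(n + 1) := sqrt_pos.2 (by linarith)
  set s := √n
  set r := √(n + 1)
  have hp : (s * r) ^ 2 = n * (n + 1) := by rw [mul_pow, hs2, hr2]
  have hsr : 0 < s * r := mul_pos hs0 hr0
  have key : 4 * n ^ 2 + n - 4 ≤ 4 * n * (s * r) := by
    nlinarith [sq_nonneg (s * r - n), mul_pos hn0 hsr]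
  have heq : r * (1 - 1 / n) + 1 / (4 * r) = (4 * n ^ 2 + n - 4) / (4 * n * r) := by
    field_simp
    linear_combination (4 * (n - 1)) * hr2
  rw [heq, div_le_iff₀ (by positivity)]
  nlinarith [mul_pos hn0 hsr]

lemma exp_inv_succ_le {n : ℝ} (hn : 1 ≤ n) : exp (1 / (n + 1)) ≤ (n + 1) / n := by
  have hn1 : n + 1 ≠ 0 := by positivity
  have h := exp_bound_div_one_sub_of_interval (x := 1 / (n + 1)) (by positivity)
    (by rw [div_lt_one (by positivity)]; linarith)
  rwa [one_sub_div hn1, add_sub_cancel_right, one_div_div] at h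

lemma exp_drift_mul_cosh_le {n u : ℝ} (hn : 1 ≤ n) (hu : 0 ≤ u) :
    exp (√(n + 1) * ((1 - 1 / n) * u + (n + 1) ^ (-(3 : ℝ) / 2))) / (n + 1) *
        cosh (√(n + 1) * √((n + 1) ^ (-(3 : ℝ) / 2) / 2 * u)) ≤ exp (√n * u) / n := by
  have hn1 : (0 : ℝ) < n + 1 := by linarith
  set c := (n + 1) ^ (-(3 : ℝ) / 2) with hc
  set L := √(n + 1) with hL
  have hL2 : L ^ 2 = n + 1 := sq_sqrt hn1.le
  have hLc : L * c = 1 / (n + 1) := by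
    rw [hL, sqrt_eq_rpow, hc, ← rpow_add hn1]
    norm_num [rpow_neg_one]
  have hL2c : L ^ 2 * c = 1 / L := by
    rw [pow_two, mul_assoc, hLc, ← hL2]
    field_simp
  have hsq : (L * √(c / 2 * u)) ^ 2 / 2 = 1 / (4 * L) * u := by
    rw [mul_pow, sq_sqrt (x := c / 2 * u) (by positivity)]
    linear_combination (u / 4) * hL2c
  calc exp (L * ((1 - 1 / n) * u + c)) / (n + 1) * cosh (L * √(c / 2 * u))
      ≤ exp (L * ((1 - 1 / n) * u + c)) / (n + 1) * exp ((L * √(c / 2 * u)) ^ 2 / 2) := by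
        gcongr; exact cosh_le_exp_half_sq _
    _ = exp ((L * (1 - 1 / n) + 1 / (4 * L)) * u + 1 / (n + 1)) / (n + 1) := by
        rw [hsq, div_mul_eq_mul_div, ← exp_add, ← hLc]; ring_nf
    _ ≤ exp (√n * u + 1 / (n + 1)) / (n + 1) := by
        gcongr; exact sqrt_mul_one_sub_inv_add_le_sqrt hn
    _ ≤ exp (√n * u) * ((n + 1) / n) / (n + 1) := by
        rw [exp_add]; gcongr; exact exp_inv_succ_le hn
    _ = exp (√n * u) / n := by field_simp

lemma inv_lt_exp_sqrt_mul_div_iff {n δ u : ℝ} (hn : 0 < n) (hδ : 0 < δ) :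
    δ⁻¹ < exp (√n * u) / n ↔ log (n / δ) / √n < u := by
  rw [div_lt_iff₀ (sqrt_pos.2 hn), log_lt_iff_lt_exp (by positivity), lt_div_iff₀ hn, mul_comm u,
    div_eq_inv_mul]

section

variable {Ω : Type*} {m m₀ : MeasurableSpace Ω} {μ : Measure Ω}

lemma integral_mul_eq_zero_of_condExp_eq_zero [IsFiniteMeasure μ] (hm : m ≤ m₀) {f g : Ω → ℝ}
    (hf : StronglyMeasurable[m] f) (hfg : Integrable (f * g) μ) (hg : Integrable g μ)
    (hg₀ : μ[g | m] =ᵐ[μ] 0) : ∫ ω, f ω * g ω ∂μ = 0 := by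
  rw [← integral_condExp hm]
  refine integral_eq_zero_of_ae ((condExp_mul_of_stronglyMeasurable_left hf hfg hg).trans ?_)
  filter_upwards [hg₀] with ω hω
  simp [hω]

theorem lintegral_mul_exp_le_lintegral_mul_cosh [IsFiniteMeasure μ] (hm : m ≤ m₀)
    {X B V : Ω → ℝ} (hX : Measurable[m] X) (hB : Measurable[m] B) (hX₀ : ∀ ω, 0 ≤ X ω)
    (hVB : ∀ᵐ ω ∂μ, |V ω| ≤ B ω) (hV : Integrable V μ) (hV₀ : μ[V | m] =ᵐ[μ] 0)
    (hXB : Integrable (fun ω => X ω * cosh (B ω)) μ) :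
    ∫⁻ ω, ENNReal.ofReal (X ω * exp (V ω)) ∂μ ≤ ∫⁻ ω, ENNReal.ofReal (X ω * cosh (B ω)) ∂μ := by
  set g : Ω → ℝ := fun ω => X ω * (sinh (B ω) / B ω)
  have hg : Measurable[m] g := hX.mul ((measurable_sinh.comp hB).div hB)
  have hgV : Integrable (g * V) μ := by
    refine hXB.mono' ((hg.mono hm le_rfl).aestronglyMeasurable.mul hV.1) ?_
    filter_upwards [hVB] with ω hω
    simp only [Pi.mul_apply, g, norm_mul, norm_eq_abs, abs_of_nonneg (hX₀ ω)]
    rw [mul_assoc, mul_comm (|_|) (|V ω|), ← abs_mul]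
    exact mul_le_mul_of_nonneg_left (abs_mul_sinh_div_le_cosh hω) (hX₀ ω)
  have hXV : Integrable (fun ω => X ω * exp (V ω)) μ := by
    refine (hXB.const_mul 2).mono' ((hX.mono hm le_rfl).aestronglyMeasurable.mul
      (measurable_exp.comp_aemeasurable hV.1.aemeasurable).aestronglyMeasurable) ?_
    filter_upwards [hVB] with ω hω
    rw [norm_eq_abs, abs_of_nonneg (mul_nonneg (hX₀ ω) (exp_pos _).le)]
    have h₁ := exp_le_cosh_add_mul_sinh_div hω
    have h₂ := (abs_le.1 (abs_mul_sinh_div_le_cosh hω)).2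
    nlinarith [hX₀ ω]
  have hpoint : ∀ᵐ ω ∂μ, X ω * exp (V ω) ≤ X ω * cosh (B ω) + (g * V) ω := by
    filter_upwards [hVB] with ω hω
    have := mul_le_mul_of_nonneg_left (exp_le_cosh_add_mul_sinh_div hω) (hX₀ ω)
    simp only [Pi.mul_apply, g]
    linarith
  have hzero : ∫ ω, (g * V) ω ∂μ = 0 :=
    integral_mul_eq_zero_of_condExp_eq_zero hm hg.stronglyMeasurable hgV hV hV₀
  rw [← ofReal_integral_eq_lintegral_ofReal hXV
      (ae_of_all _ fun ω => mul_nonneg (hX₀ ω) (exp_pos _).le),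
    ← ofReal_integral_eq_lintegral_ofReal hXB
      (ae_of_all _ fun ω => mul_nonneg (hX₀ ω) (cosh_pos _).le)]
  refine ENNReal.ofReal_le_ofReal ?_
  calc ∫ ω, X ω * exp (V ω) ∂μ ≤ ∫ ω, (X ω * cosh (B ω) + (g * V) ω) ∂μ :=
        integral_mono_ae hXV (hXB.add hgV) hpoint
    _ = ∫ ω, X ω * cosh (B ω) ∂μ := by rw [integral_add hXB hgV, hzero, add_zero]

theorem setLIntegral_exp_sqrt_mul_succ_le [IsFiniteMeasure μ] (hm : m ≤ m₀) {n K : ℝ} (hn : 1 ≤ n)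
    {A : Set Ω} (hA : MeasurableSet[m] A) {u u' w : Ω → ℝ} (hu : Measurable[m] u)
    (hu₀ : ∀ ω, 0 ≤ u ω) (huK : ∀ ω ∈ A, u ω ≤ K) (hw : Integrable w μ) (hw₀ : μ[w | m] =ᵐ[μ] 0)
    (hw₂ : ∀ᵐ ω ∂μ, |w ω| ^ 2 ≤ (n + 1) ^ (-(3 : ℝ) / 2) / 2 * u ω)
    (hu' : ∀ ω ∈ A, u' ω ≤ (1 - 1 / n) * u ω + (n + 1) ^ (-(3 : ℝ) / 2) + w ω) :
    ∫⁻ ω in A, ENNReal.ofReal (exp (√(n + 1) * u' ω) / (n + 1)) ∂μ ≤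
      ∫⁻ ω in A, ENNReal.ofReal (exp (√n * u ω) / n) ∂μ := by
  set c : ℝ := (n + 1) ^ (-(3 : ℝ) / 2)
  set L := √(n + 1)
  have hL : 0 ≤ L := sqrt_nonneg _
  have hA₀ : MeasurableSet A := hm _ hA
  set Y : Ω → ℝ := fun ω => exp (L * ((1 - 1 / n) * u ω + c)) / (n + 1)
  set B : Ω → ℝ := fun ω => L * √(c / 2 * u ω)
  have hY : Measurable[m] Y := by fun_prop
  have hB : Measurable[m] B := by fun_prop
  have hint : Integrable (fun ω => A.indicator Y ω * cosh (B ω)) μ := by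
    refine .of_bound
      (((hY.indicator hA).mul (measurable_cosh.comp hB)).mono hm le_rfl).aestronglyMeasurable
      (exp (√n * K) / n) (ae_of_all _ fun ω => ?_)
    by_cases hω : ω ∈ A
    · rw [Set.indicator_of_mem hω, norm_eq_abs, abs_of_nonneg (by positivity)]
      exact (exp_drift_mul_cosh_le hn (hu₀ ω)).trans (by gcongr; exact huK ω hω)
    · rw [Set.indicator_of_notMem hω, zero_mul, norm_zero]
      positivity
  calc ∫⁻ ω in A, ENNReal.ofReal (exp (L * u' ω) / (n + 1)) ∂μ
      ≤ ∫⁻ ω in A, ENNReal.ofReal (A.indicator Y ω * exp (L * w ω)) ∂μ := by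
        refine setLIntegral_mono' hA₀ fun ω hω => ENNReal.ofReal_le_ofReal ?_
        rw [Set.indicator_of_mem hω, div_mul_eq_mul_div, ← exp_add]
        gcongr
        rw [← mul_add]
        exact mul_le_mul_of_nonneg_left (hu' ω hω) hL
    _ ≤ ∫⁻ ω, ENNReal.ofReal (A.indicator Y ω * exp (L * w ω)) ∂μ := setLIntegral_le_lintegral _ _
    _ ≤ ∫⁻ ω, ENNReal.ofReal (A.indicator Y ω * cosh (B ω)) ∂μ := by
        refine lintegral_mul_exp_le_lintegral_mul_cosh hm (hY.indicator hA) hB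
          (Set.indicator_nonneg fun ω _ => by positivity) ?_ (hw.const_mul L) ?_ hint
        · filter_upwards [hw₂] with ω hω
          rw [abs_mul, abs_of_nonneg hL]
          exact mul_le_mul_of_nonneg_left (abs_le_sqrt (by rwa [← sq_abs])) hL
        · filter_upwards [condExp_smul (μ := μ) L w m, hw₀] with ω h h₀
          exact h.trans (by simp [h₀])
    _ = ∫⁻ ω in A, ENNReal.ofReal (Y ω * cosh (B ω)) ∂μ := by
        rw [← lintegral_indicator hA₀]
        congr 1; ext ω
        by_cases hω : ω ∈ A <;> simp [hω]
    _ ≤ ∫⁻ ω in A, ENNReal.ofReal (exp (√n * u ω) / n) ∂μ :=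
        setLIntegral_mono' hA₀ fun ω _ =>
          ENNReal.ofReal_le_ofReal (exp_drift_mul_cosh_le hn (hu₀ ω))

lemma measurableSet_forall_le {Q : ℕ → Ω → ℝ} {a : ℝ} {t : ℕ}
    (hQ : ∀ s ≤ t, Measurable[m] (Q s)) : MeasurableSet[m] {ω | ∀ s ≤ t, Q s ω ≤ a} := by
  simp only [Set.ofPred_forall]
  exact .iInter fun s => .iInter fun hs => measurableSet_le (hQ s hs) measurable_const

/-- `Q` stopped at the first time it exceeds `a`, in recursive form (unlike
`MeasureTheory.stoppedAbove`, the exceedance is strict). -/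
noncomputable def stopAbove (a : ℝ) (Q : ℕ → Ω → ℝ) : ℕ → Ω → ℝ
  | 0 => Q 0
  | t + 1 => fun ω => if ∀ s ≤ t, Q s ω ≤ a then Q (t + 1) ω else stopAbove a Q t ω

variable {a : ℝ} {Q : ℕ → Ω → ℝ}

lemma stopAbove_of_forall_le {t : ℕ} {ω : Ω} (h : ∀ s ≤ t, Q s ω ≤ a) :
    stopAbove a Q t ω = Q t ω := by
  cases t with
  | zero => rfl
  | succ t => exact if_pos fun s hs => h s (by omega)

lemma lt_stopAbove_of_exists {t : ℕ} {ω : Ω} (h : ∃ s ≤ t, a < Q s ω) :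
    a < stopAbove a Q t ω := by
  induction t with
  | zero =>
    obtain ⟨s, hs, h⟩ := h
    rwa [Nat.le_zero.1 hs] at h
  | succ t ih =>
    simp only [stopAbove]
    split_ifs with hle
    · obtain ⟨s, hs, h⟩ := h
      rcases Nat.of_le_succ hs with hs | rfl
      · exact absurd (hle s hs) h.not_ge
      · exact h
    · push Not at hle
      exact ih hle

lemma measurable_stopAbove (hQ : ∀ t, Measurable (Q t)) (t : ℕ) :
    Measurable (stopAbove a Q t) := by
  induction t with
  | zero => exact hQ 0
  | succ t ih =>
    exact Measurable.ite (measurableSet_forall_le fun s _ => hQ s) (hQ (t + 1)) ih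

lemma lintegral_stopAbove_succ_le {t : ℕ} (hQ : ∀ t, Measurable (Q t))
    (hstep : ∫⁻ ω in {ω | ∀ s ≤ t, Q s ω ≤ a}, ENNReal.ofReal (Q (t + 1) ω) ∂μ ≤
      ∫⁻ ω in {ω | ∀ s ≤ t, Q s ω ≤ a}, ENNReal.ofReal (Q t ω) ∂μ) :
    ∫⁻ ω, ENNReal.ofReal (stopAbove a Q (t + 1) ω) ∂μ ≤
      ∫⁻ ω, ENNReal.ofReal (stopAbove a Q t ω) ∂μ := by
  set A := {ω | ∀ s ≤ t, Q s ω ≤ a}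
  have hA : MeasurableSet A := measurableSet_forall_le fun s _ => hQ s
  rw [← lintegral_add_compl _ hA,
    ← lintegral_add_compl (fun ω => ENNReal.ofReal (stopAbove a Q t ω)) hA]
  gcongr 1
  · calc ∫⁻ ω in A, ENNReal.ofReal (stopAbove a Q (t + 1) ω) ∂μ
        = ∫⁻ ω in A, ENNReal.ofReal (Q (t + 1) ω) ∂μ :=
          setLIntegral_congr_fun hA fun ω hω => congrArg ENNReal.ofReal (if_pos hω)
      _ ≤ ∫⁻ ω in A, ENNReal.ofReal (Q t ω) ∂μ := hstep
      _ = ∫⁻ ω in A, ENNReal.ofReal (stopAbove a Q t ω) ∂μ :=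
          setLIntegral_congr_fun hA fun ω hω => by rw [stopAbove_of_forall_le hω]
  · exact (setLIntegral_congr_fun hA.compl fun ω hω => congrArg ENNReal.ofReal (if_neg hω)).le

/-- Ville's maximal inequality for a process that decreases in expectation until it exceeds `a`. -/
theorem mul_measure_exists_lt_le_lintegral (hQ : ∀ t, Measurable (Q t))
    (hstep : ∀ t, ∫⁻ ω in {ω | ∀ s ≤ t, Q s ω ≤ a}, ENNReal.ofReal (Q (t + 1) ω) ∂μ ≤
      ∫⁻ ω in {ω | ∀ s ≤ t, Q s ω ≤ a}, ENNReal.ofReal (Q t ω) ∂μ) :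
    ENNReal.ofReal a * μ {ω | ∃ t, a < Q t ω} ≤ ∫⁻ ω, ENNReal.ofReal (Q 0 ω) ∂μ := by
  have hunion : {ω | ∃ t, a < Q t ω} = ⋃ N, {ω | ∃ t ≤ N, a < Q t ω} := by
    ext ω; simp only [Set.mem_ofPred_eq, Set.mem_iUnion]
    exact ⟨fun ⟨t, ht⟩ => ⟨t, t, le_rfl, ht⟩, fun ⟨_, t, _, ht⟩ => ⟨t, ht⟩⟩
  have hmono : Monotone fun N => {ω | ∃ t ≤ N, a < Q t ω} :=
    fun M N hMN ω ⟨t, ht, h⟩ => ⟨t, ht.trans hMN, h⟩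
  have hdecr : ∀ N, ∫⁻ ω, ENNReal.ofReal (stopAbove a Q N ω) ∂μ ≤
      ∫⁻ ω, ENNReal.ofReal (Q 0 ω) ∂μ := by
    intro N
    induction N with
    | zero => rfl
    | succ N ih => exact (lintegral_stopAbove_succ_le hQ (hstep N)).trans ih
  rw [hunion, hmono.measure_iUnion, ENNReal.mul_iSup]
  refine iSup_le fun N => le_trans ?_ (hdecr N)
  calc ENNReal.ofReal a * μ {ω | ∃ t ≤ N, a < Q t ω}
      ≤ ENNReal.ofReal a * μ {ω | ENNReal.ofReal a ≤ ENNReal.ofReal (stopAbove a Q N ω)} := by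
        gcongr
        exact fun hω => ENNReal.ofReal_le_ofReal (lt_stopAbove_of_exists hω).le
    _ ≤ ∫⁻ ω, ENNReal.ofReal (stopAbove a Q N ω) ∂μ :=
        mul_meas_ge_le_lintegral (measurable_stopAbove hQ N).ennreal_ofReal _


theorem measure_exists_inv_lt_le {δ : ℝ} (hδ : 0 < δ) (hQ : ∀ t, Measurable (Q t))
    (hQ₀ : ∫⁻ ω, ENNReal.ofReal (Q 0 ω) ∂μ ≤ 1)
    (hstep : ∀ t, ∫⁻ ω in {ω | ∀ s ≤ t, Q s ω ≤ δ⁻¹}, ENNReal.ofReal (Q (t + 1) ω) ∂μ ≤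
      ∫⁻ ω in {ω | ∀ s ≤ t, Q s ω ≤ δ⁻¹}, ENNReal.ofReal (Q t ω) ∂μ) :
    μ {ω | ∃ t, δ⁻¹ < Q t ω} ≤ ENNReal.ofReal δ := by
  rw [← mul_one (ENNReal.ofReal δ), ← ENNReal.inv_mul_le_iff (by simpa) ENNReal.ofReal_ne_top,
    ← ENNReal.ofReal_inv_of_pos hδ]
  exact (mul_measure_exists_lt_le_lintegral hQ hstep).trans hQ₀

end

theorem stmt_7_general {Ω : Type*} {m0 : MeasurableSpace Ω} (μ : Measure Ω)
    [IsProbabilityMeasure μ] (ℱ : Filtration ℕ m0)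
    (δ : ℝ) (hδ : δ ∈ Set.Ioo (0 : ℝ) 1) (T₀ : ℕ) (hT₀ : 0 < T₀)
    (U b W : ℕ → Ω → ℝ)
    (hUadapted : Adapted ℱ U)
    (hUnonneg : ∀ t ω, 0 ≤ U t ω)
    (hU0 : ∀ ω, U 0 ω ≤ Real.log T₀ / Real.sqrt T₀)
    (thresh : ℕ → ℝ)
    (hthresh : ∀ t, thresh t = Real.log ((t + T₀) / δ) / Real.sqrt (t + T₀))
    -- recursion and drift bound, valid before the stopping time `T₁`
    (hrec : ∀ t ω, (∀ s ≤ t, U s ω ≤ thresh s) →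
      U (t + 1) ω = (1 - 1 / (t + T₀)) * U t ω + b (t + 1) ω + W (t + 1) ω ∧
      b (t + 1) ω ≤ ((t + T₀ + 1 : ℝ)) ^ (-(3 : ℝ) / 2))
    -- martingale-difference property and conditional variance bound
    (hWmean : ∀ t, μ[W (t + 1) | ℱ t] =ᵐ[μ] 0)
    (hWint : ∀ t, Integrable (W (t + 1)) μ)
    (hWsq : ∀ t, ∀ᵐ ω ∂μ,
      |W (t + 1) ω| ^ 2 ≤ ((t + T₀ + 1 : ℝ)) ^ (-(3 : ℝ) / 2) / 2 * U t ω) :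
    μ {ω | ∃ t, U t ω > thresh t} ≤ ENNReal.ofReal δ := by
  obtain ⟨hδ, -⟩ := hδ
  have hT : ∀ t : ℕ, (1 : ℝ) ≤ t + T₀ := fun t => by norm_cast; omega
  set Q : ℕ → Ω → ℝ := fun t ω => exp (√(t + T₀) * U t ω) / (t + T₀)
  have hQ_iff : ∀ t ω, δ⁻¹ < Q t ω ↔ thresh t < U t ω := fun t ω => by
    rw [hthresh]; exact inv_lt_exp_sqrt_mul_div_iff (by linarith [hT t]) hδ
  have hQ : ∀ t, Measurable[ℱ t] (Q t) := fun t => by have := hUadapted t; fun_prop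
  have hQ₀ : ∫⁻ ω, ENNReal.ofReal (Q 0 ω) ∂μ ≤ 1 := by
    refine (lintegral_mono fun ω => ENNReal.ofReal_le_one.2 ?_).trans_eq (by simp)
    have h := (inv_lt_exp_sqrt_mul_div_iff (n := T₀) (u := U 0 ω) (by exact_mod_cast hT₀)
      one_pos).not.2 (by rw [div_one]; exact not_lt.2 (hU0 ω))
    simpa [Q] using h
  have hstep : ∀ t, ∫⁻ ω in {ω | ∀ s ≤ t, Q s ω ≤ δ⁻¹}, ENNReal.ofReal (Q (t + 1) ω) ∂μ ≤
      ∫⁻ ω in {ω | ∀ s ≤ t, Q s ω ≤ δ⁻¹}, ENNReal.ofReal (Q t ω) ∂μ := by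
    intro t
    have hA : ∀ ω ∈ {ω | ∀ s ≤ t, Q s ω ≤ δ⁻¹}, ∀ s ≤ t, U s ω ≤ thresh s :=
      fun ω hω s hs => not_lt.1 ((hQ_iff s ω).not.1 (not_lt.2 (hω s hs)))
    have hQ_succ : Q (t + 1) =
        fun ω => exp (√((t + T₀ : ℝ) + 1) * U (t + 1) ω) / ((t + T₀ : ℝ) + 1) := by
      funext ω; simp only [Q]; push_cast; rw [add_right_comm]
    rw [hQ_succ]
    refine setLIntegral_exp_sqrt_mul_succ_le (ℱ.le t) (hT t)
      (measurableSet_forall_le fun s hs => (hQ s).mono (ℱ.mono hs) le_rfl) (hUadapted t)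
      (hUnonneg t) (fun ω hω => hA ω hω t le_rfl) (hWint t) (hWmean t) (hWsq t) fun ω hω => ?_
    obtain ⟨hU, hb⟩ := hrec t ω (hA ω hω)
    rw [hU]
    linarith
  simp only [gt_iff_lt, ← hQ_iff]
  exact measure_exists_inv_lt_le hδ (fun t => (hQ t).mono (ℱ.le t) le_rfl) hQ₀ hstep

/-- Supermartingale concentration lemma: with probability at least `1 − δ`, the process
`U` never exceeds the threshold `log((t+T₀)/δ)/√(t+T₀)`. -/
theorem stmt_7 {Ω : Type*} {m0 : MeasurableSpace Ω} (μ : Measure Ω)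
    [IsProbabilityMeasure μ] (ℱ : Filtration ℕ m0)
    (δ : ℝ) (hδ : δ ∈ Set.Ioo (0 : ℝ) 1) (T₀ : ℕ) (hT₀ : 0 < T₀)
    (U b W : ℕ → Ω → ℝ)
    (hUadapted : Adapted ℱ U) (hWadapted : Adapted ℱ W)
    (hUnonneg : ∀ t ω, 0 ≤ U t ω)
    (hU0 : ∀ ω, U 0 ω ≤ Real.log T₀ / Real.sqrt T₀)
    (thresh : ℕ → ℝ)
    (hthresh : ∀ t, thresh t = Real.log ((t + T₀) / δ) / Real.sqrt (t + T₀))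
    -- recursion and drift bound, valid before the stopping time `T₁`
    (hrec : ∀ t ω, (∀ s ≤ t, U s ω ≤ thresh s) →
      U (t + 1) ω = (1 - 1 / (t + T₀)) * U t ω + b (t + 1) ω + W (t + 1) ω ∧
      b (t + 1) ω ≤ ((t + T₀ + 1 : ℝ)) ^ (-(3 : ℝ) / 2))
    -- martingale-difference property and conditional variance bound
    (hWmean : ∀ t, μ[W (t + 1) | ℱ t] =ᵐ[μ] 0)
    (hWint : ∀ t, Integrable (W (t + 1)) μ)
    (hWsq : ∀ t, ∀ᵐ ω ∂μ,
      |W (t + 1) ω| ^ 2 ≤ ((t + T₀ + 1 : ℝ)) ^ (-(3 : ℝ) / 2) / 2 * U t ω) :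
    μ {ω | ∃ t, U t ω > thresh t} ≤ ENNReal.ofReal δ :=
  stmt_7_general μ ℱ δ hδ T₀ hT₀ U b W hUadapted hUnonneg hU0 thresh hthresh hrec hWmean hWint hWsq
end
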